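/- arXiv:0704.0459 — 4 statements merged into one kernel-verified Lean document; each statement's English description precedes it below -/
import Mathlib

section
/- Let G be a finite group of order n and S ⊆ G \ {1} a subset of cardinality s ≥ 1. Then there exist elements s_1, s_2, …, s_k ∈ S (repetitions allowed) with k ≤ ⌈n/s⌉ and s_1 s_2 ⋯ s_k = 1. -/
/-- Image of a point under a relation. -/
def relImage {V : Type*} (E : V → V → Prop) (a : V) : Set V := {x | E a x}

/-- Image of a set under a relation. -/
def relSetImage {V : Type*} (E : V → V → Prop) (A : Set V) : Set V :=
  {y | ∃ x ∈ A, E x y}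

/-- j-fold relational composition, with `relPow E 0` the identity relation. -/
def relPow {V : Type*} (E : V → V → Prop) : ℕ → V → V → Prop
  | 0 => fun x y => x = y
  | (n+1) => fun x y => ∃ z, relPow E n x z ∧ E z y

/-- `f` is an automorphism of the relation `E`. -/
def IsRelAuto {V : Type*} (E : V → V → Prop) (f : V ≃ V) : Prop :=
  ∀ x y, E x y ↔ E (f x) (f y)

/-- The relation `E` is point-symmetric (vertex-transitive). -/
def PointSym {V : Type*} (E : V → V → Prop) : Prop :=
  ∀ x y : V, ∃ f : V ≃ V, IsRelAuto E f ∧ f x = y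

/-- Boundary of a set: `∂(X) = Γ(X) \ X`. -/
def relBd {V : Type*} (E : V → V → Prop) (X : Set V) : Set V :=
  relSetImage E X \ X

/-- Admissible sets for the definition of connectivity. -/
def relAdm {V : Type*} (E : V → V → Prop) (X : Set V) : Prop :=
  X.Finite ∧ X.Nonempty ∧ relSetImage E X ≠ Set.univ

/-- Connectivity: minimum boundary size over admissible sets. -/
noncomputable def relKappa {V : Type*} (E : V → V → Prop) : ℕ :=
  sInf {n | ∃ X : Set V, relAdm E X ∧ (relBd E X).ncard = n}

/-- A fragment achieves the connectivity. -/
def IsFragment {V : Type*} (E : V → V → Prop) (X : Set V) : Prop :=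
  relAdm E X ∧ (relBd E X).ncard = relKappa E

/-- Cardinality of an atom. -/
noncomputable def atomCard {V : Type*} (E : V → V → Prop) : ℕ :=
  sInf {n | ∃ X : Set V, IsFragment E X ∧ X.ncard = n}

/-- An atom: a fragment of minimum cardinality. -/
def IsRelAtom {V : Type*} (E : V → V → Prop) (A : Set V) : Prop :=
  IsFragment E A ∧ A.ncard = atomCard E

/-- `E` has a directed cycle of length `k`: `k` distinct vertices cyclically joined. -/
def HasCycle {V : Type*} (E : V → V → Prop) (k : ℕ) : Prop :=
  ∃ (a : V) (l : List V), (a :: l).length = k ∧ (a :: l).Nodup ∧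
    List.Chain E a (l ++ [a])

/-!
Hamidoune's isoperimetric method, applied to the Cayley digraph `x ↦ x * t` (`t ∈ S`). Suppose
there is no relation of length at most `k = ⌈n / s⌉`. The ball of radius `k - 1` then misses `S⁻¹`,
so the smaller balls are admissible and each step grows them by at least the connectivity `κ`,
whence `1 + (k - 1) κ + s ≤ n`. Replacing `S` by `S⁻¹` (which reverses relations) we may assume
that the atoms of `S` are no larger than those of `S⁻¹`. Then two atoms that meet coincide, so the
atom through `1` is a subgroup `H`. The boundary of `H` is a union of cosets `H x` and contains
`S \ H`, so `|H|` divides `n` and `κ`, and `s ≤ |S ∩ H| + κ`. By induction on `n`, `S ∩ H` has a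
relation of length at most `⌈|H| / |S ∩ H|⌉`, which therefore exceeds `k`. Together these give
`n ≤ k κ`, against `k κ + 2 ≤ n`.
-/

open Pointwise Finset MulAction

theorem Subgroup.card_dvd_card_of_le_stabilizer {G : Type*} [Group G] [DecidableEq G]
    {H : Subgroup G} {C : Finset G} (hC : H ≤ stabilizer G C) : Nat.card H ∣ #C := by
  -- `C⁻¹` is a union of left cosets of `H`
  have hC' : (C : Set G)⁻¹ =
      QuotientGroup.mk ⁻¹' (QuotientGroup.mk '' (C : Set G)⁻¹ : Set (G ⧸ H)) := by
    refine (Set.subset_preimage_image _ _).antisymm ?_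
    rintro x ⟨y, hy, hyx⟩
    have hxy : (y⁻¹ * x)⁻¹ ∈ H := H.inv_mem (QuotientGroup.eq.1 hyx)
    have : (y⁻¹ * x)⁻¹ • y⁻¹ ∈ C := by
      rw [← mem_stabilizer_iff.1 (hC hxy)]
      exact smul_mem_smul_finset (by simpa using hy)
    simpa using this
  have hcard : Nat.card ↥((C : Set G)⁻¹) = #C := by
    rw [Nat.card_coe_set_eq, Set.ncard_inv, Set.ncard_coe_finset]
  rw [← hcard, hC', QuotientGroup.card_preimage_mk]
  exact dvd_mul_right _ _

theorem Nat.ceil_cast_div_le_iff {a b k : ℕ} (hb : 0 < b) : ⌈(a : ℚ) / b⌉₊ ≤ k ↔ a ≤ k * b := by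
  rw [Nat.ceil_le, div_le_iff₀ (by exact_mod_cast hb)]
  norm_cast

theorem Nat.le_of_dvd_of_lt_add {d a b : ℕ} (ha : d ∣ a) (hb : d ∣ b) (hab : a < b + d) :
    a ≤ b := by
  obtain ⟨x, rfl⟩ := ha
  obtain ⟨y, rfl⟩ := hb
  have : x < y + 1 := Nat.lt_of_mul_lt_mul_left (a := d) (by linarith)
  exact Nat.mul_le_mul_left d (by omega)

namespace Cayley

variable {G : Type*} [Group G]

def HasRelationOfLengthLE (S : Finset G) (k : ℕ) : Prop :=
  ∃ l : List G, (∀ x ∈ l, x ∈ S) ∧ 1 ≤ l.length ∧ l.length ≤ k ∧ l.prod = 1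

lemma HasRelationOfLengthLE.mono {S : Finset G} {k k' : ℕ} (h : HasRelationOfLengthLE S k)
    (hk : k ≤ k') : HasRelationOfLengthLE S k' :=
  let ⟨l, hS, h1, hl, hp⟩ := h
  ⟨l, hS, h1, hl.trans hk, hp⟩

lemma HasRelationOfLengthLE.map {G' : Type*} [Group G'] {S : Finset G} {T : Finset G'} {k : ℕ}
    (h : HasRelationOfLengthLE S k) (f : G →* G') (hf : ∀ x ∈ S, f x ∈ T) :
    HasRelationOfLengthLE T k := by
  obtain ⟨l, hS, h1, hl, hp⟩ := h
  refine ⟨l.map f, ?_, by simpa using h1, by simpa using hl, by rw [← map_list_prod, hp, map_one]⟩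
  simpa using fun x hx => hf x (hS x hx)

lemma HasRelationOfLengthLE.of_inv [DecidableEq G] {S : Finset G} {k : ℕ}
    (h : HasRelationOfLengthLE S⁻¹ k) : HasRelationOfLengthLE S k := by
  obtain ⟨l, hS, h1, hl, hp⟩ := h
  refine ⟨(l.map (·⁻¹)).reverse, ?_, by simpa using h1, by simpa using hl,
    by rw [← List.prod_inv_reverse, hp, inv_one]⟩
  simpa using fun x hx => by simpa using hS _ hx

variable [DecidableEq G]

def boundary (S X : Finset G) : Finset G := (X * S) \ X

lemma boundary_smul (S X : Finset G) (g : G) : boundary S (g • X) = g • boundary S X := by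
  rw [boundary, boundary, smul_mul_assoc, smul_finset_sdiff]

lemma card_union_mul (S X : Finset G) : #(X ∪ X * S) = #X + #(boundary S X) := by
  rw [boundary, ← union_sdiff_self_eq_union, card_union_of_disjoint disjoint_sdiff]

lemma card_stabilizer_dvd_card_boundary (S X : Finset G) :
    Nat.card (stabilizer G X) ∣ #(boundary S X) :=
  Subgroup.card_dvd_card_of_le_stabilizer fun g hg => by
    rw [mem_stabilizer_iff, ← boundary_smul, mem_stabilizer_iff.1 hg]

lemma sdiff_subset_boundary {S X : Finset G} (h1 : (1 : G) ∈ X) : S \ X ⊆ boundary S X :=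
  sdiff_subset_sdiff (fun x hx => by simpa using mul_mem_mul h1 hx) subset_rfl

lemma card_boundary_inter_add_card_boundary_union_le (S X Y : Finset G) :
    #(boundary S (X ∩ Y)) + #(boundary S (X ∪ Y)) ≤ #(boundary S X) + #(boundary S Y) := by
  have hX : (X ∩ Y) * S ⊆ X * S := mul_subset_mul_right inter_subset_left
  have hY : (X ∩ Y) * S ⊆ Y * S := mul_subset_mul_right inter_subset_right
  rw [← card_union_add_card_inter, ← card_union_add_card_inter (boundary S X)]
  gcongr ?_ + ?_ <;> refine card_le_card fun g => ?_ <;> have := @hX g <;> have := @hY g <;>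
    simp only [boundary, union_mul, mem_union, mem_inter, mem_sdiff] <;> tauto

def ball (S : Finset G) : ℕ → Finset G
  | 0 => {1}
  | j + 1 => ball S j ∪ ball S j * S

lemma one_mem_ball (S : Finset G) : ∀ j, (1 : G) ∈ ball S j
  | 0 => mem_singleton_self 1
  | j + 1 => mem_union_left _ (one_mem_ball S j)

lemma ball_mono (S : Finset G) : Monotone (ball S) :=
  monotone_nat_of_le_succ fun _ => subset_union_left

lemma exists_list_of_mem_ball {S : Finset G} {x : G} :
    ∀ {j}, x ∈ ball S j → ∃ l : List G, (∀ y ∈ l, y ∈ S) ∧ l.length ≤ j ∧ l.prod = x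
  | 0, hx => ⟨[], by simp, le_rfl, (mem_singleton.1 hx).symm⟩
  | j + 1, hx => by
    rcases mem_union.1 hx with hx | hx
    · obtain ⟨l, hS, hl, hp⟩ := exists_list_of_mem_ball hx
      exact ⟨l, hS, hl.trans j.le_succ, hp⟩
    · obtain ⟨y, hy, t, ht, rfl⟩ := mem_mul.1 hx
      obtain ⟨l, hS, hl, rfl⟩ := exists_list_of_mem_ball hy
      exact ⟨l ++ [t], List.forall_mem_append.2 ⟨hS, by simpa using ht⟩, by simpa using hl, by simp⟩

lemma disjoint_ball_inv {S : Finset G} {j : ℕ} (h : ¬HasRelationOfLengthLE S (j + 1)) :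
    Disjoint (ball S j) S⁻¹ := by
  refine disjoint_left.2 fun x hx hxS => h ?_
  obtain ⟨l, hS, hl, rfl⟩ := exists_list_of_mem_ball hx
  exact ⟨l ++ [l.prod⁻¹], List.forall_mem_append.2 ⟨hS, by simpa using hxS⟩, by simp,
    by simpa using hl, by simp⟩

variable [Fintype G] {S X : Finset G}

def IsAdmissible (S X : Finset G) : Prop := X.Nonempty ∧ X ∪ X * S ≠ univ

noncomputable def connectivity (S : Finset G) : ℕ :=
  sInf {c | ∃ X, IsAdmissible S X ∧ #(boundary S X) = c}

def IsFragment (S X : Finset G) : Prop := IsAdmissible S X ∧ #(boundary S X) = connectivity S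

noncomputable def atomSize (S : Finset G) : ℕ := sInf {m | ∃ X, IsFragment S X ∧ #X = m}

def IsAtom (S A : Finset G) : Prop := IsFragment S A ∧ #A = atomSize S

lemma connectivity_le (h : IsAdmissible S X) : connectivity S ≤ #(boundary S X) :=
  Nat.sInf_le ⟨X, h, rfl⟩

lemma atomSize_le (h : IsFragment S X) : atomSize S ≤ #X :=
  Nat.sInf_le ⟨X, h, rfl⟩

lemma exists_isFragment (h : IsAdmissible S X) : ∃ F, IsFragment S F := by
  obtain ⟨F, hF, hc⟩ := Nat.sInf_mem (s := {c | ∃ X, IsAdmissible S X ∧ #(boundary S X) = c})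
    ⟨_, X, h, rfl⟩
  exact ⟨F, hF, hc⟩

lemma exists_isAtom (h : IsAdmissible S X) : ∃ A, IsAtom S A := by
  obtain ⟨F, hF⟩ := exists_isFragment h
  obtain ⟨A, hA, hc⟩ := Nat.sInf_mem (s := {m | ∃ X, IsFragment S X ∧ #X = m}) ⟨_, F, hF, rfl⟩
  exact ⟨A, hA, hc⟩

lemma IsAdmissible.smul (h : IsAdmissible S X) (g : G) : IsAdmissible S (g • X) := by
  refine ⟨h.1.smul_finset, ?_⟩
  rw [smul_mul_assoc, ← smul_finset_union, Ne, smul_finset_eq_univ]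
  exact h.2

lemma IsFragment.smul (h : IsFragment S X) (g : G) : IsFragment S (g • X) :=
  ⟨h.1.smul g, by rw [boundary_smul, card_smul_finset, h.2]⟩

lemma IsAtom.smul (h : IsAtom S X) (g : G) : IsAtom S (g • X) :=
  ⟨h.1.smul g, by rw [card_smul_finset, h.2]⟩

lemma disjoint_compl_mul_inv (S X : Finset G) : Disjoint ((X ∪ X * S)ᶜ * S⁻¹) X := by
  refine disjoint_left.2 ?_
  rintro _ hx hX
  obtain ⟨y, hy, t, ht, rfl⟩ := mem_mul.1 hx
  rw [mem_compl, mem_union, not_or] at hy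
  exact hy.2 (by simpa using mul_mem_mul hX (mem_inv'.1 ht))

lemma IsAdmissible.inv_compl (h : IsAdmissible S X) : IsAdmissible S⁻¹ (X ∪ X * S)ᶜ := by
  refine ⟨nonempty_iff_ne_empty.2 (by rw [Ne, compl_eq_empty_iff]; exact h.2), fun hu => ?_⟩
  obtain ⟨x, hx⟩ := h.1
  have : x ∈ (X ∪ X * S)ᶜ ∪ (X ∪ X * S)ᶜ * S⁻¹ := hu ▸ mem_univ x
  rcases mem_union.1 this with hx' | hx'
  · exact mem_compl.1 hx' (mem_union_left _ hx)
  · exact disjoint_left.1 (disjoint_compl_mul_inv S X) hx' hx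

lemma boundary_inv_compl_subset (S X : Finset G) :
    boundary S⁻¹ (X ∪ X * S)ᶜ ⊆ boundary S X := by
  intro y hy
  obtain ⟨hy, hyc⟩ := mem_sdiff.1 hy
  have hyX : y ∉ X := disjoint_left.1 (disjoint_compl_mul_inv S X) hy
  rw [mem_compl, not_not, mem_union] at hyc
  exact mem_sdiff.2 ⟨hyc.resolve_left hyX, hyX⟩

lemma connectivity_inv_le (S : Finset G) : connectivity S⁻¹ ≤ connectivity S := by
  by_cases h : ∃ X, IsAdmissible S X
  · obtain ⟨X, hX⟩ := exists_isFragment h.choose_spec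
    calc connectivity S⁻¹ ≤ #(boundary S⁻¹ (X ∪ X * S)ᶜ) := connectivity_le hX.1.inv_compl
      _ ≤ #(boundary S X) := card_le_card (boundary_inv_compl_subset S X)
      _ = connectivity S := hX.2
  · -- then `S⁻¹` has no admissible sets either, and both connectivities are `sInf ∅ = 0`
    push Not at h
    have h' : ∀ Y, ¬IsAdmissible S⁻¹ Y := fun Y hY => h _ (by simpa using hY.inv_compl)
    simp [connectivity, h']

lemma connectivity_inv (S : Finset G) : connectivity S⁻¹ = connectivity S :=
  (connectivity_inv_le S).antisymm (by simpa using connectivity_inv_le S⁻¹)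

lemma IsFragment.inv_compl (h : IsFragment S X) : IsFragment S⁻¹ (X ∪ X * S)ᶜ := by
  refine ⟨h.1.inv_compl, (connectivity_le h.1.inv_compl).antisymm' ?_⟩
  rw [connectivity_inv, ← h.2]
  exact card_le_card (boundary_inv_compl_subset S X)

lemma two_mul_atomSize_add_connectivity_le (hm : atomSize S ≤ atomSize S⁻¹) (hX : IsFragment S X) :
    2 * atomSize S + connectivity S ≤ Fintype.card G := by
  have hXc := atomSize_le hX.inv_compl
  have hn := card_add_card_compl (X ∪ X * S)
  rw [card_union_mul, hX.2] at hn
  linarith [atomSize_le hX]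

lemma IsAtom.eq_of_inter_nonempty (hm : atomSize S ≤ atomSize S⁻¹) {A B : Finset G}
    (hA : IsAtom S A) (hB : IsAtom S B) (hAB : (A ∩ B).Nonempty) : A = B := by
  by_contra hne
  have hlt : #(A ∩ B) < atomSize S := by
    refine hA.2 ▸ card_lt_card (Finset.ssubset_iff_subset_ne.2 ⟨inter_subset_left, fun h => hne ?_⟩)
    exact eq_of_subset_of_card_le (inter_eq_left.1 h) (by rw [hA.2, hB.2])
  have hadm : IsAdmissible S (A ∩ B) := by
    refine ⟨hAB, fun hu => hA.1.1.2 (univ_subset_iff.1 (hu ▸ ?_))⟩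
    exact union_subset_union inter_subset_left (mul_subset_mul_right inter_subset_left)
  -- `A ∩ B` is admissible but too small to be a fragment, so by submodularity `A ∪ B` has boundary
  -- smaller than `κ`: it is not admissible, and counting its closed neighbourhood contradicts `hm`
  have hκ : connectivity S < #(boundary S (A ∩ B)) :=
    (connectivity_le hadm).lt_of_ne fun h => (atomSize_le ⟨hadm, h.symm⟩).not_gt hlt
  have hsub := card_boundary_inter_add_card_boundary_union_le S A B
  rw [hA.1.2, hB.1.2] at hsub
  have hunion : A ∪ B ∪ (A ∪ B) * S = univ := by
    by_contra h
    have := connectivity_le ⟨hAB.mono (inter_subset_left.trans subset_union_left), h⟩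
    omega
  have hn : #(A ∪ B) + #(boundary S (A ∪ B)) = Fintype.card G := by
    rw [← card_union_mul, hunion, card_univ]
  have := card_union_add_card_inter A B
  have := two_mul_atomSize_add_connectivity_le hm hA.1
  have := hAB.card_pos
  have := hA.2
  have := hB.2
  omega

lemma exists_isAtom_coe_eq_stabilizer (hm : atomSize S ≤ atomSize S⁻¹) (hX : IsAdmissible S X) :
    ∃ A, IsAtom S A ∧ (A : Set G) = stabilizer G A := by
  obtain ⟨A₀, hA₀⟩ := exists_isAtom hX
  obtain ⟨a, ha⟩ := hA₀.1.1.1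
  have hA := hA₀.smul a⁻¹
  have h1 : (1 : G) ∈ a⁻¹ • A₀ := by simpa using smul_mem_smul_finset (a := a⁻¹) ha
  refine ⟨a⁻¹ • A₀, hA, Set.ext fun g => ⟨fun hg => ?_, fun hg => ?_⟩⟩
  · refine mem_stabilizer_iff.2 ((hA.smul g).eq_of_inter_nonempty hm hA ⟨g, mem_inter.2 ⟨?_, hg⟩⟩)
    simpa using smul_mem_smul_finset (a := g) h1
  · rw [SetLike.mem_coe, mem_stabilizer_iff] at hg
    have := smul_mem_smul_finset (a := g) h1
    rw [hg] at this
    exact mem_coe.2 (by simpa using this)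

lemma isAdmissible_ball (hS : S.Nonempty) {i j : ℕ} (h : ¬HasRelationOfLengthLE S (j + 1))
    (hij : i < j) : IsAdmissible S (ball S i) := by
  refine ⟨⟨1, one_mem_ball S i⟩, fun hu => ?_⟩
  obtain ⟨x, hx⟩ := hS
  have : x⁻¹ ∈ ball S (i + 1) := by rw [ball, hu]; exact mem_univ _
  exact disjoint_left.1 (disjoint_ball_inv h) (ball_mono S hij this) (inv_mem_inv hx)

lemma one_add_mul_connectivity_le_card_ball (hS : S.Nonempty) {j : ℕ}
    (h : ¬HasRelationOfLengthLE S (j + 1)) : ∀ i ≤ j, 1 + i * connectivity S ≤ #(ball S i)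
  | 0, _ => by simp [ball]
  | i + 1, hi => by
    have := connectivity_le (isAdmissible_ball hS h hi)
    have := one_add_mul_connectivity_le_card_ball hS h i (by omega)
    rw [ball, card_union_mul]
    linarith

lemma one_add_mul_connectivity_add_card_le (hS : S.Nonempty) {j : ℕ}
    (h : ¬HasRelationOfLengthLE S (j + 1)) :
    1 + j * connectivity S + #S ≤ Fintype.card G := by
  have := one_add_mul_connectivity_le_card_ball hS h j le_rfl
  rw [← card_inv S, ← card_univ]
  calc _ ≤ #(ball S j) + #S⁻¹ := by omega
    _ = #(ball S j ∪ S⁻¹) := (card_union_of_disjoint (disjoint_ball_inv h)).symm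
    _ ≤ _ := card_le_univ _

lemma card_le_card_subtype_add_connectivity {H : Subgroup G} [DecidablePred (· ∈ H)]
    {A : Finset G} (hA : IsFragment S A) (hAH : (A : Set G) = H) :
    #S ≤ #(S.subtype (· ∈ H)) + connectivity S := by
  have hmem {g : G} : g ∈ A ↔ g ∈ H := by rw [← mem_coe, hAH, SetLike.mem_coe]
  rw [card_subtype, ← hA.2, ← card_filter_add_card_filter_not (· ∈ H) (s := S)]
  refine add_le_add le_rfl (card_le_card fun x hx => sdiff_subset_boundary (hmem.2 H.one_mem) ?_)
  rw [mem_filter] at hx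
  exact mem_sdiff.2 ⟨hx.1, mt hmem.1 hx.2⟩

theorem hasRelationOfLengthLE_of_atomSize_le (hS1 : (1 : G) ∉ S) (hS : S.Nonempty)
    (hm : atomSize S ≤ atomSize S⁻¹)
    (ih : ∀ H : Subgroup G, Nat.card H < Nat.card G → ∀ T : Finset H, 1 ∉ T → T.Nonempty →
      HasRelationOfLengthLE T ⌈(Nat.card H : ℚ) / #T⌉₊) :
    HasRelationOfLengthLE S ⌈(Nat.card G : ℚ) / #S⌉₊ := by
  by_contra hno
  obtain ⟨j, hj⟩ : ∃ j, ⌈(Nat.card G : ℚ) / #S⌉₊ = j + 1 :=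
    Nat.exists_eq_add_one.2 (Nat.ceil_pos.2 (by simp [Fintype.card_pos, hS.card_pos]))
  have hk : Nat.card G ≤ (j + 1) * #S := (Nat.ceil_cast_div_le_iff hS.card_pos).1 hj.le
  rw [hj] at hno
  rw [Nat.card_eq_fintype_card] at hk ih
  have hball := one_add_mul_connectivity_add_card_le hS hno
  have hj0 : 0 < j := Nat.pos_of_ne_zero fun h => by subst h; omega
  have hκ : connectivity S < #S := Nat.lt_of_mul_lt_mul_left (a := j) (by linarith)
  obtain ⟨A, hA, hAH⟩ := exists_isAtom_coe_eq_stabilizer hm (isAdmissible_ball hS hno hj0)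
  set H := stabilizer G A
  have hH : Nat.card H = #A := by
    rw [← SetLike.coe_sort_coe, ← hAH, Nat.card_coe_set_eq, Set.ncard_coe_finset]
  have hHG : Nat.card H < Fintype.card G :=
    hH ▸ (card_le_card subset_union_left).trans_lt (card_lt_card (ssubset_univ_iff.2 hA.1.1.2))
  set T : Finset H := S.subtype (· ∈ H)
  have hT : #S ≤ #T + connectivity S := card_le_card_subtype_add_connectivity hA.1 hAH
  have hTne : T.Nonempty := card_pos.1 (by omega)
  have hTk : (j + 1) * #T < Nat.card H := by
    have hT1 : (1 : H) ∉ T := by simpa [T] using hS1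
    refine lt_of_not_ge fun hle => hno ?_
    exact ((ih H hHG T hT1 hTne).map H.subtype (by simp [T])).mono
      ((Nat.ceil_cast_div_le_iff hTne.card_pos).2 hle)
  have hn : Fintype.card G ≤ (j + 1) * connectivity S :=
    Nat.le_of_dvd_of_lt_add (Nat.card_eq_fintype_card (α := G) ▸ H.card_subgroup_dvd_card)
      (dvd_mul_of_dvd_right (hA.1.2 ▸ card_stabilizer_dvd_card_boundary S A) _)
      (by nlinarith [Nat.mul_le_mul_left (j + 1) hT])
  nlinarith

end Cayley

open Cayley in
theorem hasRelationOfLengthLE_ceil_card_div_card {G : Type*} [Group G] [Finite G] {S : Finset G}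
    (hS1 : (1 : G) ∉ S) (hS : S.Nonempty) :
    HasRelationOfLengthLE S ⌈(Nat.card G : ℚ) / #S⌉₊ := by
  induction hn : Nat.card G using Nat.strong_induction_on generalizing G with
  | _ n ih =>
  classical
  cases nonempty_fintype G
  have ih' : ∀ H : Subgroup G, Nat.card H < Nat.card G → ∀ T : Finset H, 1 ∉ T → T.Nonempty →
      HasRelationOfLengthLE T ⌈(Nat.card H : ℚ) / #T⌉₊ :=
    fun H hH T hT1 hT => ih _ (hn ▸ hH) hT1 hT rfl
  subst hn
  -- a relation of `S⁻¹`, reversed, is one of `S`; so we may pick the side with the smaller atoms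
  rcases le_total (atomSize S) (atomSize S⁻¹) with hm | hm
  · exact hasRelationOfLengthLE_of_atomSize_le hS1 hS hm ih'
  · have := hasRelationOfLengthLE_of_atomSize_le (S := S⁻¹) (by simpa) hS.inv (by rwa [inv_inv]) ih'
    rw [card_inv] at this
    exact this.of_inv

theorem stmt_6 {G : Type*} [Group G] [Fintype G] (n s : ℕ)
    (hn : Fintype.card G = n) (S : Finset G) (hS1 : (1 : G) ∉ S)
    (hs : S.card = s) (hs1 : 1 ≤ s) :
    ∃ l : List G, (∀ x ∈ l, x ∈ S) ∧ 1 ≤ l.length ∧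
      l.length ≤ ⌈(n : ℚ) / (s : ℚ)⌉₊ ∧ l.prod = 1 := by
  subst hn hs
  have := hasRelationOfLengthLE_ceil_card_div_card hS1 (card_pos.1 hs1)
  rwa [Nat.card_eq_fintype_card] at this
end

section
/- Let Γ = (V,E) be a finite point-symmetric reflexive relation of degree r, and suppose there is a vertex v and integer j ≥ 2 with Γ^j(v) ∩ Γ⁻(v) = {v} and κ(Γ) = r − 1, where Γ is connected from v (V = ⋃_{i≥0} Γ^i(v)) and E ≠ V × V. Then |Γ^j(v) \ Γ^{j-1}(v)| ≥ r − 1. -/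
theorem stmt_7 {V : Type*} [Fintype V] (E : V → V → Prop) (r : ℕ)
    (hrefl : ∀ x, E x x) (hsym : PointSym E)
    (hdeg : ∀ x, (relImage E x).ncard = r)
    (v : V) (hconn : ∀ w, ∃ i, relPow E i v w)
    (hne : ¬ ∀ x y, E x y)
    (j : ℕ) (hj : 2 ≤ j)
    (hcap : {x | relPow E j v x} ∩ {x | E x v} = {v})
    (hkappa : relKappa E = r - 1) :
    ({x | relPow E j v x} \ {x | relPow E (j - 1) v x}).ncard ≥ r - 1 := by
  classical
  have hrefl' : ∀ (n : ℕ) (x : V), relPow E n x x := by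
    intro n
    induction n with
    | zero => intro x; rfl
    | succ n ih => intro x; exact ⟨x, ih x, hrefl x⟩
  set X : Set V := {x | relPow E (j-1) v x} with hX
  have hj1 : j - 1 + 1 = j := by omega
  have himg : relSetImage E X = {x | relPow E j v x} := by
    ext y
    constructor
    · rintro ⟨z, hz, hzy⟩
      have h2 : relPow E (j-1+1) v y := ⟨z, hz, hzy⟩
      rwa [hj1] at h2
    · intro hy
      rw [← hj1] at hy
      obtain ⟨z, hz, hzy⟩ := hy
      exact ⟨z, hz, hzy⟩
  have hindeg : ∀ x : V, {y | E y x}.ncard = {y | E y v}.ncard := by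
    intro x
    obtain ⟨f, hf, hfv⟩ := hsym v x
    have himage : f '' {y | E y v} = {y | E y x} := by
      ext z
      simp only [Set.mem_image, Set.mem_setOf_eq]
      constructor
      · rintro ⟨y, hy, rfl⟩
        rw [← hfv]; exact (hf y v).mp hy
      · intro hz
        refine ⟨f.symm z, ?_, f.apply_symm_apply z⟩
        have h2 := (hf (f.symm z) v).mpr
        rw [f.apply_symm_apply, hfv] at h2
        exact h2 hz
    rw [← himage, Set.ncard_image_of_injective _ f.injective]
  have hr : r = {y | E y v}.ncard := by
    have h1 : ∑ x : V, ({y | E x y}.toFinset.card) = ∑ y : V, ({x | E x y}.toFinset.card) := by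
      simp only [Set.toFinset_setOf, Finset.card_filter]
      exact Finset.sum_comm
    have h2 : ∀ x : V, {y | E x y}.toFinset.card = r := by
      intro x
      rw [← Set.ncard_eq_toFinset_card']
      exact hdeg x
    have h3 : ∀ y : V, {x | E x y}.toFinset.card = {y | E y v}.ncard := by
      intro y
      rw [← Set.ncard_eq_toFinset_card']
      exact hindeg y
    simp only [h2, h3, Finset.sum_const, Finset.card_univ, smul_eq_mul] at h1
    have hn : 0 < Fintype.card V := Fintype.card_pos_iff.mpr ⟨v⟩
    exact Nat.eq_of_mul_eq_mul_left hn h1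
  have hne_univ : relSetImage E X ≠ Set.univ := by
    intro h
    rw [himg] at h
    have h1 : {x | E x v} = {v} := by
      rw [← hcap, h, Set.univ_inter]
    have h2 : ({y | E y v} : Set V).ncard = 1 := by
      rw [h1, Set.ncard_singleton]
    have hr1 : r = 1 := by rw [hr, h2]
    have hE : ∀ x y, E x y → y = x := by
      intro x y hxy
      have hx : (relImage E x).ncard = 1 := by rw [hdeg x, hr1]
      obtain ⟨a, ha⟩ := Set.ncard_eq_one.mp hx
      have h3 : x ∈ relImage E x := hrefl x
      have h4 : y ∈ relImage E x := hxy
      rw [ha] at h3 h4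
      simp only [Set.mem_singleton_iff] at h3 h4
      rw [h3, h4]
    have hall : ∀ (n : ℕ) (y : V), relPow E n v y → y = v := by
      intro n
      induction n with
      | zero => intro y hy; exact hy.symm
      | succ n ih => rintro y ⟨z, hz, hzy⟩; rw [hE z y hzy, ih z hz]
    apply hne
    intro x y
    have hx : x = v := hall j x (by
      have hmem : x ∈ ({x | relPow E j v x} : Set V) := by rw [h]; trivial
      exact hmem)
    have hy : y = v := hall j y (by
      have hmem : y ∈ ({x | relPow E j v x} : Set V) := by rw [h]; trivial
      exact hmem)
    rw [hx, hy]; exact hrefl v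
  have hadm : relAdm E X := ⟨Set.toFinite X, ⟨v, hrefl' (j-1) v⟩, hne_univ⟩
  have hle : relKappa E ≤ (relBd E X).ncard := Nat.sInf_le ⟨X, hadm, rfl⟩
  have hbd : relBd E X = {x | relPow E j v x} \ {x | relPow E (j-1) v x} := by
    rw [relBd, himg]
  rw [← hbd, ← hkappa]
  exact hle
end

section
/- Let G be a finite abelian group of order n and S ⊆ G \ {0} with |S| = s ≥ 1. Then there exist s_1, …, s_k ∈ S with k ≤ ⌈n/s⌉ and s_1 + ⋯ + s_k = 0. -/
/-!
Let `B = S ∪ {0}` and suppose there is no zero-sum of length between `1` and `m = ⌈n / |S|⌉`.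
Then for `j < m` the only representation of `0` in `j • B + B` is `0 + 0`, so Scherk's theorem
gives `|(j + 1) • B| ≥ |j • B| + |S|`, whence `|m • B| ≥ m |S| + 1 > n`, a contradiction.

Scherk's theorem goes by induction on the second summand. If `A + B ⊆ A`, translation by any
`b ∈ B` permutes `A`, so `0 = a + b` with `a ∈ A` and `b = 0`. Otherwise pick `e ∈ A`, `b ∈ B`
with `e + b ∉ A`: the Dyson e-transform at `e` keeps `|A| + |B|` and the uniqueness of the
representation of `0`, does not enlarge the sumset, and strictly shrinks the second set.
-/

open Finset Pointwise

namespace Finset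

variable {G : Type*} [AddCommGroup G] [DecidableEq G]

theorem addDysonETransform_zero_unique {A B : Finset G} {e : G} (he : e ∈ A)
    (h : ∀ a ∈ A, ∀ b ∈ B, a + b = 0 → a = 0) :
    ∀ a ∈ (addDysonETransform e (A, B)).1, ∀ b ∈ (addDysonETransform e (A, B)).2,
      a + b = 0 → a = 0 := by
  intro a ha b hb hab
  simp only [addDysonETransform_fst, addDysonETransform_snd, mem_union, mem_inter,
    mem_vadd_finset, vadd_eq_add] at ha hb
  obtain ⟨hbB, c, hcA, rfl⟩ := hb
  obtain haA | ⟨d, hdB, rfl⟩ := ha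
  · exact h a haA _ hbB hab
  · have hc : c = 0 := h c hcA d hdB (by rw [← hab]; abel)
    have he0 : e = 0 := h e he _ hbB (by rw [hc]; abel)
    subst hc he0
    simpa using hab

/-- **Scherk's theorem**. -/
theorem card_add_card_le_card_add_add_one_of_zero_unique {A B : Finset G}
    (hA : (0 : G) ∈ A) (hB : (0 : G) ∈ B) (h : ∀ a ∈ A, ∀ b ∈ B, a + b = 0 → a = 0) :
    #A + #B ≤ #(A + B) + 1 := by
  induction hcard : #B using Nat.strong_induction_on generalizing A B with
  | _ k ih =>
  subst hcard
  by_cases hstable : ∀ a ∈ A, ∀ b ∈ B, a + b ∈ A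
  · have hBzero : B ⊆ {0} := by
      intro b hb
      have hsub : b +ᵥ A ⊆ A := by
        intro x hx
        obtain ⟨a, ha, rfl⟩ := mem_vadd_finset.1 hx
        simpa [add_comm] using hstable a ha b hb
      have hzero : (0 : G) ∈ b +ᵥ A := by
        rwa [eq_of_subset_of_card_le hsub (card_vadd_finset b A).ge]
      obtain ⟨a, ha, hab⟩ := mem_vadd_finset.1 hzero
      rw [vadd_eq_add, add_comm] at hab
      rw [h a ha b hb hab, zero_add] at hab
      exact mem_singleton.2 hab
    have := card_le_card_add_right (s := A) ⟨0, hB⟩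
    have := card_le_card hBzero
    simp only [card_singleton] at this
    omega
  · push Not at hstable
    obtain ⟨e, he, b, hb, hout⟩ := hstable
    have hT0 : (0 : G) ∈ (addDysonETransform e (A, B)).1 := mem_union_left _ hA
    have hT1 : (0 : G) ∈ (addDysonETransform e (A, B)).2 :=
      mem_inter.2 ⟨hB, mem_vadd_finset.2 ⟨e, he, by simp⟩⟩
    have hlt : #(addDysonETransform e (A, B)).2 < #B := by
      refine card_lt_card ⟨inter_subset_left, fun hsub => hout ?_⟩
      obtain ⟨a, ha, hab⟩ := mem_vadd_finset.1 (mem_inter.1 (hsub hb)).2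
      rwa [← hab, vadd_eq_add, add_neg_cancel_left]
    have := ih _ hlt hT0 hT1 (addDysonETransform_zero_unique he h) rfl
    have hsub : _ ⊆ A + B := addDysonETransform.subset e (A, B)
    have hsum : _ = #A + #B := addDysonETransform.card e (A, B)
    have := card_le_card hsub
    omega

end Finset

section ZeroSum

variable {G : Type*} [DecidableEq G]

theorem Finset.exists_list_of_mem_nsmul_insert_zero [AddMonoid G] {S : Finset G} {j : ℕ} {g : G}
    (hg : g ∈ j • insert 0 S) :
    ∃ l : List G, (∀ x ∈ l, x ∈ S) ∧ l.length ≤ j ∧ l.sum = g := by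
  induction j generalizing g with
  | zero =>
    rw [zero_nsmul, mem_zero] at hg
    exact ⟨[], by simp, le_rfl, hg.symm⟩
  | succ j ih =>
    obtain ⟨a, ha, b, hb, rfl⟩ := mem_add.1 (succ_nsmul (insert 0 S) j ▸ hg)
    obtain ⟨l, hlS, hlen, rfl⟩ := ih ha
    obtain rfl | hbS := mem_insert.1 hb
    · exact ⟨l, hlS, by omega, (add_zero _).symm⟩
    · refine ⟨l ++ [b], ?_, by simpa using hlen, by simp⟩
      simpa [or_imp, forall_and] using ⟨hlS, hbS⟩

variable [AddCommGroup G]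

theorem card_nsmul_insert_zero_ge {S : Finset G} (hS0 : (0 : G) ∉ S) {m : ℕ}
    (hfree : ∀ l : List G, (∀ x ∈ l, x ∈ S) → 1 ≤ l.length → l.length ≤ m → l.sum ≠ 0)
    {j : ℕ} (hj : j ≤ m) : j * #S + 1 ≤ #(j • insert 0 S) := by
  induction j with
  | zero => simp
  | succ j ih =>
    have hunique : ∀ a ∈ j • insert 0 S, ∀ b ∈ insert 0 S, a + b = 0 → a = 0 := by
      intro a ha b hb hab
      obtain rfl | hbS := mem_insert.1 hb
      · simpa using hab
      obtain ⟨l, hlS, hlen, rfl⟩ := Finset.exists_list_of_mem_nsmul_insert_zero ha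
      refine absurd (by simpa using hab) (hfree (l ++ [b]) ?_ (by simp) (by simp; omega))
      simpa [or_imp, forall_and] using ⟨hlS, hbS⟩
    have hscherk := card_add_card_le_card_add_add_one_of_zero_unique
      (zero_mem_nsmul (n := j) (mem_insert_self 0 S)) (mem_insert_self 0 S) hunique
    rw [← succ_nsmul, card_insert_of_notMem hS0] at hscherk
    have := ih (by omega)
    rw [add_mul, one_mul]
    omega

theorem exists_zero_sum_of_card_le_mul [Fintype G] {S : Finset G} (hS0 : (0 : G) ∉ S) {m : ℕ}
    (hm : Fintype.card G ≤ m * #S) :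
    ∃ l : List G, (∀ x ∈ l, x ∈ S) ∧ 1 ≤ l.length ∧ l.length ≤ m ∧ l.sum = 0 := by
  by_contra! hfree
  have := card_nsmul_insert_zero_ge hS0 hfree le_rfl
  have := card_le_univ (m • insert 0 S)
  omega

end ZeroSum

theorem stmt_13 {G : Type*} [AddCommGroup G] [Fintype G] (n s : ℕ)
    (hn : Fintype.card G = n) (S : Finset G) (hS0 : (0 : G) ∉ S)
    (hs : S.card = s) (hs1 : 1 ≤ s) :
    ∃ l : List G, (∀ x ∈ l, x ∈ S) ∧ 1 ≤ l.length ∧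
      l.length ≤ ⌈(n : ℚ) / (s : ℚ)⌉₊ ∧ l.sum = 0 := by
  classical
  refine exists_zero_sum_of_card_le_mul hS0 ?_
  rw [hn, hs]
  have hceil : (n : ℚ) ≤ ⌈(n : ℚ) / (s : ℚ)⌉₊ * s :=
    (div_le_iff₀ (by exact_mod_cast hs1)).1 (Nat.le_ceil _)
  exact_mod_cast hceil
end

section
/- Let Γ = (V,E) be a point-symmetric reflexive relation of finite degree r ≥ 2 on a finite set V, connected in the sense that V = ⋃_{i≥0} Γ^i(v) for some (equivalently, every) v, with E ≠ V × V. If A is an atom of Γ and either a(Γ) ≤ a(Γ⁻) holds, then |A| ≤ κ(Γ) and the induced relation Γ[A] is point-symmetric. -/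
/-!
Atoms of `Γ` coincide or are disjoint: if two distinct atoms `A`, `B` meet, submodularity
of `|∂|` forces `|∂(A ∪ B)| < κ`, so `Γ(A ∪ B) = V` and `|V| < 2a + κ`; but the complement
of `Γ(A)` is a fragment of `Γ⁻`, whence `|V| ≥ 2a(Γ) + κ` as soon as `a(Γ) ≤ a(Γ⁻)`.
Automorphisms permute atoms, so the stabiliser of an atom `A` is transitive on `A` and `Γ[A]` is
point-symmetric. In a finite point-symmetric relation in- and out-degrees agree, so every vertex
of `A` has `d` out-neighbours and `d` in-neighbours in `A`, and every vertex of `Γ` has `r`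
in-neighbours. Each `z ∈ ∂(A)` lies in an atom disjoint from `A` which supplies `d` of its `r`
in-neighbours, so counting arcs from `A` to `∂(A)` gives `|A| (r - d) ≤ κ (r - d)`, and
connectivity gives `d < r`.
-/

open Set

section Connectivity

variable {V : Type*} {E : V → V → Prop}

lemma relSetImage_mono {X Y : Set V} (h : X ⊆ Y) : relSetImage E X ⊆ relSetImage E Y :=
  fun _ ⟨x, hx, hxz⟩ => ⟨x, h hx, hxz⟩

lemma relSetImage_union (X Y : Set V) :
    relSetImage E (X ∪ Y) = relSetImage E X ∪ relSetImage E Y := by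
  ext z
  simp only [relSetImage, mem_union, mem_ofPred_eq, or_and_right, exists_or]

lemma subset_relSetImage (hrefl : ∀ x, E x x) (X : Set V) : X ⊆ relSetImage E X :=
  fun x hx => ⟨x, hx, hrefl x⟩

lemma ncard_relSetImage [Finite V] (hrefl : ∀ x, E x x) (X : Set V) :
    (relSetImage E X).ncard = X.ncard + (relBd E X).ncard := by
  rw [relBd, ← ncard_sdiff_add_ncard_of_subset (subset_relSetImage hrefl X), add_comm]

/- Since `|∂X| = |Γ(X)| - |X|`, this is inclusion–exclusion for `Γ(X)` and `Γ(Y)`, together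
with `Γ(X ∩ Y) ⊆ Γ(X) ∩ Γ(Y)` and `Γ(X ∪ Y) = Γ(X) ∪ Γ(Y)`. -/
lemma relBd_inter_add_relBd_union_le [Finite V] (hrefl : ∀ x, E x x) (X Y : Set V) :
    (relBd E (X ∩ Y)).ncard + (relBd E (X ∪ Y)).ncard ≤
      (relBd E X).ncard + (relBd E Y).ncard := by
  have hI := ncard_relSetImage hrefl (X ∩ Y)
  have hU := ncard_relSetImage hrefl (X ∪ Y)
  have hX := ncard_relSetImage hrefl X
  have hY := ncard_relSetImage hrefl Y
  have hIsub : (relSetImage E (X ∩ Y)).ncard ≤ (relSetImage E X ∩ relSetImage E Y).ncard :=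
    ncard_le_ncard (subset_inter (relSetImage_mono inter_subset_left)
      (relSetImage_mono inter_subset_right))
  rw [relSetImage_union] at hU
  have := ncard_union_add_ncard_inter X Y
  have := ncard_union_add_ncard_inter (relSetImage E X) (relSetImage E Y)
  omega

lemma mem_of_relPow {X : Set V} (hX : relSetImage E X ⊆ X) {i : ℕ} {x y : V}
    (hxy : relPow E i x y) (hx : x ∈ X) : y ∈ X := by
  induction i generalizing y with
  | zero => exact hxy ▸ hx
  | succ n ih =>
    obtain ⟨z, hxz, hzy⟩ := hxy
    exact hX ⟨z, ih hxz, hzy⟩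

lemma ncard_relImage_restrict {A : Set V} (x : A) :
    (relImage (fun x y : A => E x.1 y.1) x).ncard = (relImage E x ∩ A).ncard := by
  rw [← ncard_image_of_injective _ Subtype.val_injective]
  congr 1
  ext y
  simp [relImage, and_comm]

lemma ncard_mul_le_ncard_mul [Finite V] (X Y : Set V) {m n : ℕ}
    (hm : ∀ x ∈ X, m ≤ (relImage E x ∩ Y).ncard)
    (hn : ∀ y ∈ Y, (relImage (flip E) y ∩ X).ncard ≤ n) : X.ncard * m ≤ Y.ncard * n := by
  classical
  lift X to Finset V using X.toFinite
  lift Y to Finset V using Y.toFinite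
  simp only [ncard_coe_finset] at hm hn ⊢
  refine Finset.card_mul_le_card_mul E (fun x hx => ?_) (fun y hy => ?_)
  · convert hm x hx using 1
    rw [← ncard_coe_finset, Finset.coe_bipartiteAbove]
    congr 1
    ext
    simp [relImage, and_comm]
  · convert hn y hy using 1
    rw [← ncard_coe_finset, Finset.coe_bipartiteBelow]
    congr 1
    ext
    simp [relImage, flip, and_comm]

section Automorphism

variable {f : V ≃ V}

lemma IsRelAuto.flip (hf : IsRelAuto E f) : IsRelAuto (flip E) f := fun x y => hf y x

lemma IsRelAuto.relPow (hf : IsRelAuto E f) {i : ℕ} {x y : V} (h : relPow E i x y) :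
    relPow E i (f x) (f y) := by
  induction i generalizing y with
  | zero => exact congrArg f h
  | succ n ih =>
    obtain ⟨z, hxz, hzy⟩ := h
    exact ⟨f z, ih hxz, (hf z y).1 hzy⟩

lemma IsRelAuto.relImage_apply (hf : IsRelAuto E f) (x : V) :
    relImage E (f x) = f '' relImage E x := by
  ext z
  rw [f.image_eq_preimage_symm]
  simp only [relImage, mem_ofPred_eq, mem_preimage]
  rw [hf x, f.apply_symm_apply]

lemma IsRelAuto.relSetImage_image (hf : IsRelAuto E f) (X : Set V) :
    relSetImage E (f '' X) = f '' relSetImage E X := by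
  ext z
  rw [f.image_eq_preimage_symm (relSetImage E X)]
  simp only [relSetImage, mem_ofPred_eq, mem_preimage, exists_mem_image]
  simp only [hf _ (f.symm z), f.apply_symm_apply]

lemma IsRelAuto.relBd_image (hf : IsRelAuto E f) (X : Set V) :
    relBd E (f '' X) = f '' relBd E X := by
  rw [relBd, relBd, hf.relSetImage_image, image_sdiff f.injective]

lemma IsRelAuto.relAdm_image (hf : IsRelAuto E f) {X : Set V} (hX : relAdm E X) :
    relAdm E (f '' X) := by
  refine ⟨hX.1.image f, hX.2.1.image f, ?_⟩
  rw [hf.relSetImage_image, f.image_eq_preimage_symm, Ne, preimage_eq_univ_iff,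
    f.symm.range_eq_univ, univ_subset_iff]
  exact hX.2.2

lemma IsRelAuto.isRelAtom_image (hf : IsRelAuto E f) {A : Set V} (hA : IsRelAtom E A) :
    IsRelAtom E (f '' A) := by
  refine ⟨⟨hf.relAdm_image hA.1.1, ?_⟩, ?_⟩
  · rw [hf.relBd_image, ncard_image_of_injective _ f.injective, hA.1.2]
  · rw [ncard_image_of_injective _ f.injective, hA.2]

end Automorphism

lemma PointSym.flip (h : PointSym E) : PointSym (flip E) := fun x y =>
  let ⟨f, hf, hfx⟩ := h x y
  ⟨f, hf.flip, hfx⟩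

lemma PointSym.ncard_relImage_eq (h : PointSym E) (x y : V) :
    (relImage E x).ncard = (relImage E y).ncard := by
  obtain ⟨f, hf, rfl⟩ := h x y
  rw [hf.relImage_apply, ncard_image_of_injective _ f.injective]

lemma PointSym.ncard_relImage_flip [Finite V] (h : PointSym E) (x : V) :
    (relImage (_root_.flip E) x).ncard = (relImage E x).ncard := by
  have hpos : 0 < Nat.card V := Nat.card_pos_iff.2 ⟨⟨x⟩, inferInstance⟩
  have key : ∀ {R : V → V → Prop}, PointSym R →
      Nat.card V * (relImage R x).ncard ≤ Nat.card V * (relImage (_root_.flip R) x).ncard :=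
    fun hR => by
      simpa using ncard_mul_le_ncard_mul univ univ
        (fun y _ => by rw [inter_univ, hR.ncard_relImage_eq x y])
        (fun y _ => by rw [inter_univ, hR.flip.ncard_relImage_eq y x])
  exact le_antisymm (Nat.le_of_mul_le_mul_left (key h.flip) hpos)
    (Nat.le_of_mul_le_mul_left (key h) hpos)

lemma ncard_relImage_flip_inter_of_pointSym [Finite V] {A : Set V}
    (hA : PointSym (fun x y : A => E x.1 y.1)) {x : V} (hx : x ∈ A) :
    (relImage (flip E) x ∩ A).ncard = (relImage E x ∩ A).ncard := by
  rw [← ncard_relImage_restrict (E := E) ⟨x, hx⟩,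
    ← ncard_relImage_restrict (E := flip E) ⟨x, hx⟩]
  exact hA.ncard_relImage_flip _

lemma PointSym.eq_univ_of_relSetImage_subset (hsym : PointSym E) {v : V}
    (hconn : ∀ w, ∃ i, relPow E i v w) {X : Set V} (hX : X.Nonempty)
    (hcl : relSetImage E X ⊆ X) : X = univ := by
  obtain ⟨x, hx⟩ := hX
  obtain ⟨f, hf, rfl⟩ := hsym v x
  refine eq_univ_of_forall fun w => ?_
  obtain ⟨i, hi⟩ := hconn (f.symm w)
  simpa using mem_of_relPow hcl (hf.relPow hi) hx

lemma PointSym.relBd_nonempty (hrefl : ∀ x, E x x) (hsym : PointSym E) {v : V}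
    (hconn : ∀ w, ∃ i, relPow E i v w) {X : Set V} (hX : relAdm E X) :
    (relBd E X).Nonempty := by
  rw [nonempty_iff_ne_empty]
  intro h
  have hXu := hsym.eq_univ_of_relSetImage_subset hconn hX.2.1 (sdiff_eq_empty.1 h)
  apply hX.2.2
  apply eq_univ_of_univ_subset
  rw [← hXu]
  exact subset_relSetImage hrefl X

lemma relKappa_le {X : Set V} (hX : relAdm E X) : relKappa E ≤ (relBd E X).ncard :=
  Nat.sInf_le ⟨X, hX, rfl⟩

lemma atomCard_le {X : Set V} (hX : IsFragment E X) : atomCard E ≤ X.ncard :=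
  Nat.sInf_le ⟨X, hX, rfl⟩

lemma relAdm_compl_relSetImage [Finite V] {X : Set V} (hX : relAdm E X) :
    relAdm (flip E) (relSetImage E X)ᶜ := by
  refine ⟨toFinite _, nonempty_compl.2 hX.2.2, fun h => ?_⟩
  obtain ⟨x, hx⟩ := hX.2.1
  obtain ⟨w, hw, hxw⟩ := h.symm ▸ mem_univ x
  exact hw ⟨x, hx, hxw⟩

lemma relBd_flip_compl_relSetImage_subset (X : Set V) :
    relBd (flip E) (relSetImage E X)ᶜ ⊆ relBd E X := by
  rintro z ⟨⟨w, hw, hzw⟩, hz⟩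
  exact ⟨not_not.1 hz, fun hzX => hw ⟨z, hzX, hzw⟩⟩

lemma relKappa_le_relKappa_flip [Finite V] {X : Set V} (hX : relAdm (flip E) X) :
    relKappa E ≤ relKappa (flip E) := by
  refine le_csInf ⟨_, X, hX, rfl⟩ fun _ ⟨Y, hY, hYn⟩ => hYn ▸ ?_
  exact (relKappa_le (relAdm_compl_relSetImage (E := flip E) hY)).trans
    (ncard_le_ncard (relBd_flip_compl_relSetImage_subset (E := flip E) Y))

lemma relKappa_flip [Finite V] {X : Set V} (hX : relAdm E X) :
    relKappa (flip E) = relKappa E :=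
  le_antisymm (relKappa_le_relKappa_flip (E := flip E) hX)
    (relKappa_le_relKappa_flip (relAdm_compl_relSetImage hX))

lemma IsFragment.compl_relSetImage [Finite V] {X : Set V} (hX : IsFragment E X) :
    IsFragment (flip E) (relSetImage E X)ᶜ := by
  have hadm := relAdm_compl_relSetImage hX.1
  refine ⟨hadm, le_antisymm ?_ (relKappa_le hadm)⟩
  calc _ ≤ (relBd E X).ncard := ncard_le_ncard (relBd_flip_compl_relSetImage_subset X)
    _ = relKappa (flip E) := by rw [hX.2, relKappa_flip hX.1]

lemma two_mul_atomCard_add_relKappa_le [Finite V] (hrefl : ∀ x, E x x)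
    (hatom : atomCard E ≤ atomCard (flip E)) {X : Set V} (hX : IsFragment E X) :
    2 * atomCard E + relKappa E ≤ Nat.card V := by
  have hΓ := ncard_relSetImage hrefl X
  have hsplit := ncard_add_ncard_compl (relSetImage E X)
  have hX_le := atomCard_le hX
  have hcompl_le := atomCard_le hX.compl_relSetImage
  have hκ := hX.2
  omega

lemma IsRelAtom.eq_of_inter_nonempty [Finite V] (hrefl : ∀ x, E x x)
    (hatom : atomCard E ≤ atomCard (flip E)) {A B : Set V} (hA : IsRelAtom E A)
    (hB : IsRelAtom E B) (hAB : (A ∩ B).Nonempty) : A = B := by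
  by_contra hne
  have hI : relAdm E (A ∩ B) := ⟨toFinite _, hAB, fun h =>
    hA.1.1.2.2 (eq_univ_of_univ_subset (h ▸ relSetImage_mono inter_subset_left))⟩
  have hIbd : relKappa E < (relBd E (A ∩ B)).ncard := by
    refine (relKappa_le hI).lt_of_ne fun h => hne ?_
    have hIA := atomCard_le ⟨hI, h.symm⟩
    exact (eq_of_subset_of_ncard_le inter_subset_left (hA.2 ▸ hIA)).symm.trans
      (eq_of_subset_of_ncard_le inter_subset_right (hB.2 ▸ hIA))
  have hsub := relBd_inter_add_relBd_union_le hrefl A B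
  have hκA := hA.1.2
  have hκB := hB.1.2
  have hU : relSetImage E (A ∪ B) = univ := by
    by_contra h
    have := relKappa_le ⟨toFinite _, hA.1.1.2.1.mono subset_union_left, h⟩
    omega
  have hUcard := ncard_relSetImage hrefl (A ∪ B)
  rw [hU, ncard_univ] at hUcard
  have hUI := ncard_union_add_ncard_inter A B
  have hV := two_mul_atomCard_add_relKappa_le hrefl hatom hA.1
  have hIpos := (ncard_pos (toFinite _)).2 hAB
  have hAa := hA.2
  have hBa := hB.2
  omega

lemma IsRelAtom.pointSym_restrict [Finite V] (hrefl : ∀ x, E x x) (hsym : PointSym E)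
    (hatom : atomCard E ≤ atomCard (flip E)) {A : Set V} (hA : IsRelAtom E A) :
    PointSym (fun x y : A => E x.1 y.1) := by
  rintro ⟨x, hx⟩ ⟨y, hy⟩
  obtain ⟨f, hf, rfl⟩ := hsym x y
  have hfA : f '' A = A := (hf.isRelAtom_image hA).eq_of_inter_nonempty hrefl hatom hA
    ⟨f x, mem_image_of_mem f hx, hy⟩
  have hmem : ∀ z, z ∈ A ↔ f z ∈ A := fun z => by
    rw [← f.injective.mem_set_image, hfA]
  exact ⟨f.subtypeEquiv hmem, fun p q => hf p q, rfl⟩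

lemma IsRelAtom.ncard_relImage_flip_inter_add_le [Finite V] (hrefl : ∀ x, E x x)
    (hsym : PointSym E) (hatom : atomCard E ≤ atomCard (flip E)) {r : ℕ}
    (hdeg : ∀ x, (relImage E x).ncard = r) {A : Set V} (hA : IsRelAtom E A) {a z : V}
    (ha : a ∈ A) (hz : z ∉ A) :
    (relImage (flip E) z ∩ A).ncard + (relImage E a ∩ A).ncard ≤ r := by
  obtain ⟨g, hg, rfl⟩ := hsym a z
  have hgA : ∀ w ∈ A, w ∉ g '' A := fun w hw hw' =>
    hz ((hg.isRelAtom_image hA).eq_of_inter_nonempty hrefl hatom hA ⟨w, hw', hw⟩ ▸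
      mem_image_of_mem g ha)
  have hsplit := ncard_inter_add_ncard_sdiff_eq_ncard (relImage (flip E) (g a)) (g '' A)
  have hA_le : (relImage (flip E) (g a) ∩ A).ncard ≤ (relImage (flip E) (g a) \ g '' A).ncard :=
    ncard_le_ncard fun w hw => ⟨hw.1, hgA w hw.2⟩
  have hgA_card : (relImage (flip E) (g a) ∩ g '' A).ncard = (relImage E a ∩ A).ncard := by
    rw [hg.flip.relImage_apply, ← image_inter g.injective, ncard_image_of_injective _ g.injective,
      ncard_relImage_flip_inter_of_pointSym (hA.pointSym_restrict hrefl hsym hatom) ha]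
  have hin : (relImage (flip E) (g a)).ncard = r := (hsym.ncard_relImage_flip _).trans (hdeg _)
  omega

end Connectivity

theorem stmt_14_general {V : Type*} [Fintype V] (E : V → V → Prop) (r : ℕ)
    (hrefl : ∀ x, E x x) (hsym : PointSym E)
    (hdeg : ∀ x, (relImage E x).ncard = r)
    (v : V) (hconn : ∀ w, ∃ i, relPow E i v w)
    (A : Set V) (hA : IsRelAtom E A)
    (hatom : atomCard E ≤ atomCard (fun a b => E b a)) :
    A.ncard ≤ relKappa E ∧ PointSym (fun x y : A => E x.1 y.1) := by
  have hps := hA.pointSym_restrict hrefl hsym hatom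
  refine ⟨?_, hps⟩
  obtain ⟨a, ha⟩ := hA.1.1.2.1
  set d := (relImage E a ∩ A).ncard
  have hout : ∀ x ∈ A, (relImage E x ∩ A).ncard = d := fun x hx => by
    simpa only [ncard_relImage_restrict] using hps.ncard_relImage_eq ⟨x, hx⟩ ⟨a, ha⟩
  have hd : d < r := by
    obtain ⟨z, ⟨x, hx, hxz⟩, hz⟩ := hsym.relBd_nonempty hrefl hconn hA.1.1
    rw [← hout x hx, ← hdeg x]
    exact ncard_lt_ncard ⟨inter_subset_left, fun h => hz (h hxz).2⟩
  have hcount : A.ncard * (r - d) ≤ (relBd E A).ncard * (r - d) := by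
    refine ncard_mul_le_ncard_mul (E := E) A (relBd E A) (fun x hx => ?_) (fun z hz => ?_)
    · have hsplit := ncard_inter_add_ncard_sdiff_eq_ncard (relImage E x) A
      have hdiff : (relImage E x \ A).ncard ≤ (relImage E x ∩ relBd E A).ncard :=
        ncard_le_ncard fun z hz => ⟨hz.1, ⟨x, hx, hz.1⟩, hz.2⟩
      have hin := hout x hx
      have hr := hdeg x
      omega
    · have hz_in := hA.ncard_relImage_flip_inter_add_le hrefl hsym hatom hdeg ha hz.2
      omega
  exact hA.1.2 ▸ Nat.le_of_mul_le_mul_right hcount (by omega)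

theorem stmt_14 {V : Type*} [Fintype V] (E : V → V → Prop) (r : ℕ) (hr : 2 ≤ r)
    (hrefl : ∀ x, E x x) (hsym : PointSym E)
    (hdeg : ∀ x, (relImage E x).ncard = r)
    (v : V) (hconn : ∀ w, ∃ i, relPow E i v w)
    (hne : ¬ ∀ x y, E x y)
    (A : Set V) (hA : IsRelAtom E A)
    (hatom : atomCard E ≤ atomCard (fun a b => E b a)) :
    A.ncard ≤ relKappa E ∧ PointSym (fun x y : A => E x.1 y.1) :=
  stmt_14_general E r hrefl hsym hdeg v hconn A hA hatom
end
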